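/- Let G = (V,E) be a finite simple undirected graph with V nonempty and let k ≥ 1 be an integer. If G contains a k-clique, that is, a set C ⊆ V with |C| = k all of whose pairs of distinct vertices are adjacent, then the minmax value for Player 1 in the clique game Γ(G,k) equals exactly 1/k. -/

import Mathlib

/-- A mixed strategy on a finite strategy set `S`. -/
def IsMixedStrategy {S : Type*} [Fintype S] (σ : S → ℝ) : Prop :=
  (∀ s, 0 ≤ σ s) ∧ ∑ s, σ s = 1

/-- The minmax (threat) value for Player 1 of the three-player game with payoff `u`:
the minimum over mixed strategy profiles of Players 2 and 3 of the best-response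
payoff of Player 1 (the minimum is attained, so `sInf` is a minimum). -/
noncomputable def minmaxVal {S₁ S₂ S₃ : Type*} [Fintype S₁] [Fintype S₂] [Fintype S₃]
    (u : S₁ × S₂ × S₃ → ℝ) : ℝ :=
  sInf { v | ∃ σ₂ : S₂ → ℝ, ∃ σ₃ : S₃ → ℝ,
    IsMixedStrategy σ₂ ∧ IsMixedStrategy σ₃ ∧
    v = ⨆ a : S₁, ∑ j : S₂, ∑ k : S₃, σ₂ j * σ₃ k * u (a, j, k) }

/-- The clique game `Γ(G,k)`: Player 1 picks a label in `Fin k` and points at one of the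
two bullies (`Fin 2`); each bully picks a label in `Fin k` and a vertex of `G`.
Player 1 gets payoff 1 iff his label matches the label of the bully he points at, or the
bullies choose the same label with different vertices, or different labels with the same
vertex, or distinct non-adjacent vertices; otherwise payoff 0. -/
def cliqueGame {V : Type*} [DecidableEq V] (G : SimpleGraph V) [DecidableRel G.Adj]
    (k : ℕ) : (Fin k × Fin 2) × (Fin k × V) × (Fin k × V) → ℝ :=
  fun p =>
    if p.1.1 = (if p.1.2 = 0 then p.2.1.1 else p.2.2.1) ∨
       (p.2.1.1 = p.2.2.1 ∧ p.2.1.2 ≠ p.2.2.2) ∨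
       (p.2.1.1 ≠ p.2.2.1 ∧ p.2.1.2 = p.2.2.2) ∨
       (p.2.1.2 ≠ p.2.2.2 ∧ ¬ G.Adj p.2.1.2 p.2.2.2)
    then 1 else 0

/-! Player 1 can guarantee `1/k`: naming label `x` and pointing at Player 2 wins whenever
Player 2's label is `x`, and some label carries at least `1/k` of Player 2's mass. Conversely,
let both bullies play a uniformly random label `x` together with the vertex `φ x` of an
embedded `k`-clique `φ`. Then their vertices are equal exactly when their labels are, and
otherwise adjacent, so Player 1 wins only by guessing the label of the bully he points at,
which has probability `1/k`. -/

open Finset SimpleGraph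

section MinmaxValue

variable {S₁ S₂ S₃ : Type*} [Fintype S₂] [Fintype S₃]

def expectedPayoff (u : S₁ × S₂ × S₃ → ℝ) (σ₂ : S₂ → ℝ) (σ₃ : S₃ → ℝ) (a : S₁) : ℝ :=
  ∑ j, ∑ k, σ₂ j * σ₃ k * u (a, j, k)

lemma sum_le_expectedPayoff {u : S₁ × S₂ × S₃ → ℝ} {σ₂ : S₂ → ℝ} {σ₃ : S₃ → ℝ} {a : S₁}
    {s : Finset S₂} (hu₀ : ∀ j k, 0 ≤ u (a, j, k)) (hu₁ : ∀ j ∈ s, ∀ k, 1 ≤ u (a, j, k))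
    (h₂ : ∀ j, 0 ≤ σ₂ j) (h₃ : IsMixedStrategy σ₃) :
    ∑ j ∈ s, σ₂ j ≤ expectedPayoff u σ₂ σ₃ a := by
  have hterm : ∀ j k, 0 ≤ σ₂ j * σ₃ k * u (a, j, k) := fun j k =>
    mul_nonneg (mul_nonneg (h₂ j) (h₃.1 k)) (hu₀ j k)
  calc ∑ j ∈ s, σ₂ j = ∑ j ∈ s, ∑ k, σ₂ j * σ₃ k := by simp_rw [← mul_sum, h₃.2, mul_one]
    _ ≤ ∑ j ∈ s, ∑ k, σ₂ j * σ₃ k * u (a, j, k) := by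
      refine sum_le_sum fun j hj => sum_le_sum fun k _ => ?_
      exact le_mul_of_one_le_right (mul_nonneg (h₂ j) (h₃.1 k)) (hu₁ j hj k)
    _ ≤ expectedPayoff u σ₂ σ₃ a :=
      sum_le_sum_of_subset_of_nonneg (subset_univ s) fun j _ _ => sum_nonneg fun k _ => hterm j k

theorem minmaxVal_eq_of_forall_exists_le_of_forall_le [Fintype S₁] [Nonempty S₁]
    {u : S₁ × S₂ × S₃ → ℝ} {c : ℝ}
    (hguarantee : ∀ σ₂ σ₃, IsMixedStrategy σ₂ → IsMixedStrategy σ₃ →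
      ∃ a, c ≤ expectedPayoff u σ₂ σ₃ a)
    {σ₂ : S₂ → ℝ} {σ₃ : S₃ → ℝ} (h₂ : IsMixedStrategy σ₂) (h₃ : IsMixedStrategy σ₃)
    (hthreat : ∀ a, expectedPayoff u σ₂ σ₃ a ≤ c) :
    minmaxVal u = c := by
  have hprofile : ∃ τ₂ : S₂ → ℝ, ∃ τ₃ : S₃ → ℝ, IsMixedStrategy τ₂ ∧ IsMixedStrategy τ₃ ∧
      (⨆ a, expectedPayoff u σ₂ σ₃ a) = ⨆ a, expectedPayoff u τ₂ τ₃ a :=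
    ⟨σ₂, σ₃, h₂, h₃, rfl⟩
  refine le_antisymm ((csInf_le ⟨c, ?_⟩ hprofile).trans (ciSup_le hthreat))
    (le_csInf ⟨_, hprofile⟩ ?_) <;>
  · rintro v ⟨τ₂, τ₃, hτ₂, hτ₃, rfl⟩
    obtain ⟨a, ha⟩ := hguarantee τ₂ τ₃ hτ₂ hτ₃
    exact le_ciSup_of_le (Set.finite_range _).bddAbove a ha

end MinmaxValue

section CliqueGame

variable {V : Type*} [DecidableEq V] {G : SimpleGraph V} [DecidableRel G.Adj]
  {k : ℕ}

lemma cliqueGame_nonneg (p : (Fin k × Fin 2) × (Fin k × V) × (Fin k × V)) :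
    0 ≤ cliqueGame G k p := by
  unfold cliqueGame
  split_ifs <;> norm_num

lemma exists_one_div_le_expectedPayoff_cliqueGame [Fintype V] [NeZero k]
    {σ₂ σ₃ : Fin k × V → ℝ} (h₂ : IsMixedStrategy σ₂) (h₃ : IsMixedStrategy σ₃) :
    ∃ a, 1 / (k : ℝ) ≤ expectedPayoff (cliqueGame G k) σ₂ σ₃ a := by
  have hmass : Fintype.card (Fin k) • (1 / (k : ℝ)) ≤ ∑ j, σ₂ j := by
    rw [h₂.2, Fintype.card_fin, nsmul_eq_mul, mul_one_div_cancel (NeZero.ne _)]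
  obtain ⟨x, hx⟩ := Fintype.exists_le_sum_fiber_of_nsmul_le_sum Prod.fst hmass
  refine ⟨(x, 0), hx.trans (sum_le_expectedPayoff (fun _ _ => cliqueGame_nonneg _) ?_ h₂.1 h₃)⟩
  intro j hj m
  simp [cliqueGame, (mem_filter.mp hj).2]

noncomputable def cliqueStrategy (k : ℕ) (f : Fin k → V) : Fin k × V → ℝ :=
  fun p => if p.2 = f p.1 then 1 / (k : ℝ) else 0

lemma sum_cliqueStrategy_mul [Fintype V] (f : Fin k → V) (g : Fin k × V → ℝ) :
    ∑ p, cliqueStrategy k f p * g p = ∑ x, 1 / (k : ℝ) * g (x, f x) := by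
  rw [Fintype.sum_prod_type]
  simp [cliqueStrategy, ite_mul]

lemma isMixedStrategy_cliqueStrategy [Fintype V] [NeZero k] (f : Fin k → V) :
    IsMixedStrategy (cliqueStrategy k f) := by
  refine ⟨fun p => by unfold cliqueStrategy; split_ifs <;> positivity, ?_⟩
  simpa using sum_cliqueStrategy_mul f 1

lemma cliqueGame_apply_embedding (φ : completeGraph (Fin k) ↪g G) (a : Fin k × Fin 2)
    (x₂ x₃ : Fin k) :
    cliqueGame G k (a, (x₂, φ x₂), (x₃, φ x₃)) =
      if a.1 = (if a.2 = 0 then x₂ else x₃) then 1 else 0 := by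
  by_cases hx : x₂ = x₃
  · subst hx
    simp [cliqueGame]
  · simp [cliqueGame, hx, φ.map_adj_iff]

lemma expectedPayoff_cliqueGame_cliqueStrategy [Fintype V] (φ : completeGraph (Fin k) ↪g G)
    (a : Fin k × Fin 2) :
    expectedPayoff (cliqueGame G k) (cliqueStrategy k φ) (cliqueStrategy k φ) a = 1 / k := by
  have hk : (k : ℝ) ≠ 0 := Nat.cast_ne_zero.mpr a.1.pos.ne'
  unfold expectedPayoff
  simp_rw [mul_assoc, ← mul_sum, sum_cliqueStrategy_mul, cliqueGame_apply_embedding]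
  split_ifs <;> simp <;> field_simp

end CliqueGame

theorem cliqueGame_minmax_eq_of_clique_general (V : Type*) [Fintype V] [DecidableEq V]
    (G : SimpleGraph V) [DecidableRel G.Adj] (k : ℕ) (hk : 1 ≤ k)
    (hclique : ∃ C : Finset V, C.card = k ∧
      ∀ v ∈ C, ∀ w ∈ C, v ≠ w → G.Adj v w) :
    minmaxVal (cliqueGame G k) = 1 / (k : ℝ) := by
  obtain ⟨C, hCk, hC⟩ := hclique
  have : NeZero k := ⟨by omega⟩
  let φ := topEmbeddingOfNotCliqueFree (IsNClique.not_cliqueFree ⟨hC, hCk⟩)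
  exact minmaxVal_eq_of_forall_exists_le_of_forall_le
    (fun _ _ => exists_one_div_le_expectedPayoff_cliqueGame)
    (isMixedStrategy_cliqueStrategy φ) (isMixedStrategy_cliqueStrategy φ)
    (fun a => (expectedPayoff_cliqueGame_cliqueStrategy φ a).le)

/-- If `G` contains a `k`-clique, the minmax value for Player 1 in the clique game
`Γ(G,k)` is exactly `1/k`. -/
theorem cliqueGame_minmax_eq_of_clique (V : Type*) [Fintype V] [DecidableEq V]
    [Nonempty V] (G : SimpleGraph V) [DecidableRel G.Adj] (k : ℕ) (hk : 1 ≤ k)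
    (hclique : ∃ C : Finset V, C.card = k ∧
      ∀ v ∈ C, ∀ w ∈ C, v ≠ w → G.Adj v w) :
    minmaxVal (cliqueGame G k) = 1 / (k : ℝ) :=
  cliqueGame_minmax_eq_of_clique_general V G k hk hclique
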